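/- arXiv:0802.3585 — 2 statements merged into one kernel-verified Lean document; each statement's English description precedes it below -/
import Mathlib

section
/- Let π be a compatible price and, for each stopping time τ ≤ T, let z^τ be an 𝓕_τ-measurable, nonnegative, integrable random variable satisfying π(δ_τ Z) = E[Z · z^τ] for every bounded 𝓕_τ-measurable Z; in particular E z^τ = π(δ_τ). Then the family (z^τ) is continuous in expectation: for every sequence of stopping times (τ_n) with τ_n → τ almost surely, lim_n E z^{τ_n} = E z^τ. -/
open MeasureTheory Set Filter
open scoped ENNReal Topology Classical

noncomputable section

namespace Equil

variable {Ω : Type*} [m : MeasurableSpace Ω]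

/-- The Stieltjes measure associated to a path (`0` if the path is not a
nondecreasing right-continuous function). -/
def pathMeasure (f : ℝ → ℝ) : Measure ℝ :=
  if h : Monotone f ∧ ∀ x, ContinuousWithinAt f (Set.Ici x) x then
    StieltjesFunction.measure ⟨f, h.1, h.2⟩
  else 0

/-- A consumption plan in `E₊`: pathwise it is the cumulative consumption,
zero before time `0`, nondecreasing, right-continuous, constant after `T`;
the process is adapted and `x_T ∈ L^p(P)`. -/
structure IsPlan (P : Measure Ω) (ℱ : Filtration ℝ m) (T : ℝ) (p : ℝ≥0∞)
    (x : Ω → ℝ → ℝ) : Prop where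
  mono : ∀ ω, Monotone (x ω)
  right_cont : ∀ ω t, ContinuousWithinAt (x ω) (Set.Ici t) t
  zero_neg : ∀ ω, ∀ t < 0, x ω t = 0
  const_ge : ∀ ω, ∀ t, T ≤ t → x ω t = x ω T
  adapted : ∀ t, Measurable[ℱ t] fun ω => x ω t
  memLp : MemLp (fun ω => x ω T) p P

/-- Membership in the commodity space `E`, the linear span of `E₊`. -/
def MemE (P : Measure Ω) (ℱ : Filtration ℝ m) (T : ℝ) (p : ℝ≥0∞)
    (z : Ω → ℝ → ℝ) : Prop :=
  ∃ x y, IsPlan P ℱ T p x ∧ IsPlan P ℱ T p y ∧ z = x - y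

/-- The intertemporal norm `‖z‖ = (E ∫_{[0,T]} |z_t|^p dκ)^{1/p}` with
`κ = Lebesgue + δ_T`. -/
def inorm (P : Measure Ω) (T : ℝ) (p : ℝ≥0∞) (z : Ω → ℝ → ℝ) : ℝ :=
  (∫ ω, ((∫ t in Set.Icc (0 : ℝ) T, |z ω t| ^ p.toReal) + |z ω T| ^ p.toReal) ∂P) ^
    (1 / p.toReal)

/-- The pathwise total variation of the measure `dz` on `[0,T]`. -/
def pathTV (T : ℝ) (f : ℝ → ℝ) : ℝ :=
  |f 0| + (eVariationOn f (Set.Icc 0 T)).toReal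

/-- The strong norm `‖z‖_s = E ‖z‖_TV`. -/
def strongNorm (P : Measure Ω) (T : ℝ) (z : Ω → ℝ → ℝ) : ℝ :=
  ∫ ω, pathTV T (z ω) ∂P

/-- The pairing `E ∫_{[0,T]} ψ dx` of a process `ψ` with a plan `x`. -/
def pairPlan (P : Measure Ω) (T : ℝ) (ψ : Ω → ℝ → ℝ) (x : Ω → ℝ → ℝ) : ℝ :=
  ∫ ω, ∫ t in Set.Icc (0 : ℝ) T, ψ ω t ∂(pathMeasure (x ω)) ∂P

/-- A price (a linear functional, nonnegative on `E₊`) is compatible if its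
restriction to the consumption set `E₊` is continuous for the intertemporal
norm. -/
def Compatible (P : Measure Ω) (ℱ : Filtration ℝ m) (T : ℝ) (p : ℝ≥0∞)
    (π : (Ω → ℝ → ℝ) →ₗ[ℝ] ℝ) : Prop :=
  ∀ x, IsPlan P ℱ T p x →
    ∀ xn : ℕ → Ω → ℝ → ℝ, (∀ n, IsPlan P ℱ T p (xn n)) →
      Tendsto (fun n => inorm P T p (xn n - x)) atTop (nhds 0) →
      Tendsto (fun n => π (xn n)) atTop (nhds (π x))

/-- The cumulative path of `δ_τ h`, the random measure delivering `h` units at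
time `τ`. -/
def deltaPlan (τ h : Ω → ℝ) : Ω → ℝ → ℝ := fun ω t => if τ ω ≤ t then h ω else 0

/-- A `[0,T]`-valued stopping time. -/
def IsBddStoppingTime (ℱ : Filtration ℝ m) (T : ℝ) (τ : Ω → ℝ) : Prop :=
  IsStoppingTime ℱ (fun ω => (τ ω : WithTop ℝ)) ∧ ∀ ω, τ ω ∈ Set.Icc 0 T

/-- Right-continuous on `[0,T)` with left limits on `(0,T]`. -/
def CadlagOn (T : ℝ) (f : ℝ → ℝ) : Prop :=
  (∀ t ∈ Set.Ico (0 : ℝ) T, ContinuousWithinAt f (Set.Ici t) t) ∧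
  ∀ t ∈ Set.Ioc (0 : ℝ) T, ∃ l, Tendsto f (nhdsWithin t (Set.Ico 0 t)) (nhds l)

/-- `sup_{t ∈ [0,T]} f t`. -/
def supOn (T : ℝ) (f : ℝ → ℝ) : ℝ := ⨆ t : Set.Icc (0 : ℝ) T, f t

/-- `ψ` is the optional projection of `ξ`: `ψ_τ = E[ξ_τ | 𝓕_τ]` a.s.
for every stopping time `τ ≤ T`. -/
def IsOptionalProjection (P : Measure Ω) (ℱ : Filtration ℝ m) (T : ℝ)
    (ψ ξ : Ω → ℝ → ℝ) : Prop :=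
  ∀ (τ : Ω → ℝ) (hτ : IsStoppingTime ℱ (fun ω => (τ ω : WithTop ℝ))), (∀ ω, τ ω ∈ Set.Icc 0 T) →
    (fun ω => ψ ω (τ ω)) =ᵐ[P] P[fun ω => ξ ω (τ ω)|hτ.measurableSpace]

/-- The optional sigma-field on `Ω × [0,T]`: generated by the adapted processes
with right-continuous sample paths admitting left limits. -/
def optionalSigma (ℱ : Filtration ℝ m) (T : ℝ) : MeasurableSpace (Ω × ℝ) :=
  ⨆ f ∈ {f : Ω → ℝ → ℝ |
      (∀ t, Measurable[ℱ t] fun ω => f ω t) ∧ ∀ ω, CadlagOn T (f ω)},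
    MeasurableSpace.comap (fun q : Ω × ℝ => f q.1 q.2) (borel ℝ)

/-- A set `A` is radial at `x ∈ A`. -/
def RadialAt (A : Set (Ω → ℝ → ℝ)) (x : Ω → ℝ → ℝ) : Prop :=
  ∀ y, ∃ a, a ∈ Set.Ioc (0 : ℝ) 1 ∧
    ∀ α ∈ Set.Icc (0 : ℝ) a, (1 - α) • x + α • y ∈ A

/-! Testing the representation against `Z = 1` gives `E z^τ = π(δ_τ)`, so the claim is the
continuity of `τ ↦ π(δ_τ)`. Since `|1_{σ ≤ t} - 1_{τ ≤ t}|` is the indicator of the interval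
between `σ` and `τ`, `‖δ_σ - δ_τ‖^p = E |σ - τ|`, which tends to `0` along `τₙ → τ` by dominated
convergence (all times lie in `[0,T]`); compatibility of `π` then finishes. -/

namespace IsBddStoppingTime

variable {ℱ : Filtration ℝ m} {T : ℝ} {τ : Ω → ℝ}

lemma measurableSet_le (hτ : IsBddStoppingTime ℱ T τ) (t : ℝ) :
    MeasurableSet[ℱ t] {ω | τ ω ≤ t} := by
  simpa only [WithTop.coe_le_coe] using hτ.1 t

lemma measurable (hτ : IsBddStoppingTime ℱ T τ) : Measurable τ :=
  measurable_of_Iic fun t => ℱ.le t _ (hτ.measurableSet_le t)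

end IsBddStoppingTime

lemma isPlan_deltaPlan_one (P : Measure Ω) [IsFiniteMeasure P] (ℱ : Filtration ℝ m) {T : ℝ}
    (p : ℝ≥0∞) {τ : Ω → ℝ} (hτ : IsBddStoppingTime ℱ T τ) :
    IsPlan P ℱ T p (deltaPlan τ fun _ => 1) where
  mono ω s t hst := by
    by_cases h : τ ω ≤ s
    · simp [deltaPlan, h, h.trans hst]
    · simp only [deltaPlan, if_neg h]
      split_ifs <;> norm_num
  right_cont ω t := by
    by_cases h : τ ω ≤ t
    · refine (continuousWithinAt_const (b := (1 : ℝ))).congr_of_eventuallyEq ?_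
        (by simp [deltaPlan, h])
      filter_upwards [self_mem_nhdsWithin] with s hs
      simp [deltaPlan, h.trans hs]
    · refine (continuousWithinAt_const (b := (0 : ℝ))).congr_of_eventuallyEq ?_
        (by simp [deltaPlan, h])
      filter_upwards [mem_nhdsWithin_of_mem_nhds (Iio_mem_nhds (not_le.mp h))] with s hs
      simp [deltaPlan, not_le.mpr (mem_Iio.mp hs)]
  zero_neg ω t ht := by simp [deltaPlan, ht.trans_le (hτ.2 ω).1]
  const_ge ω t ht := by simp [deltaPlan, (hτ.2 ω).2, (hτ.2 ω).2.trans ht]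
  adapted t := Measurable.ite (hτ.measurableSet_le t) measurable_const measurable_const
  memLp := by
    simpa [deltaPlan, (hτ.2 _).2] using memLp_const (μ := P) (p := p) (1 : ℝ)

lemma abs_ite_sub_ite_rpow {a b r : ℝ} (hr : 0 < r) (t : ℝ) :
    |(if a ≤ t then (1 : ℝ) else 0) - (if b ≤ t then 1 else 0)| ^ r
      = (Ico (min a b) (max a b)).indicator 1 t := by
  by_cases ha : a ≤ t <;> by_cases hb : b ≤ t <;>
    simp [ha, hb, Real.zero_rpow hr.ne', Set.indicator, not_le.mp]

lemma setIntegral_abs_ite_sub_ite_rpow {a b T r : ℝ} (ha : a ∈ Icc 0 T) (hb : b ∈ Icc 0 T)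
    (hr : 0 < r) :
    ∫ t in Icc 0 T, |(if a ≤ t then (1 : ℝ) else 0) - (if b ≤ t then 1 else 0)| ^ r
      = |a - b| := by
  have hsub : Ico (min a b) (max a b) ⊆ Icc 0 T :=
    Ico_subset_Icc_self.trans (Icc_subset_Icc (le_min ha.1 hb.1) (max_le ha.2 hb.2))
  simp_rw [abs_ite_sub_ite_rpow hr]
  rw [setIntegral_indicator measurableSet_Ico, inter_eq_self_of_subset_right hsub,
    Pi.one_def, setIntegral_const, measureReal_def, Real.volume_Ico, smul_eq_mul, mul_one,
    ENNReal.toReal_ofReal (sub_nonneg.mpr min_le_max), max_sub_min_eq_abs, abs_sub_comm]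

lemma inorm_deltaPlan_one_sub (P : Measure Ω) {T : ℝ} {p : ℝ≥0∞} (hp : 0 < p.toReal)
    {σ τ : Ω → ℝ} (hσ : ∀ ω, σ ω ∈ Icc 0 T) (hτ : ∀ ω, τ ω ∈ Icc 0 T) :
    inorm P T p ((deltaPlan σ fun _ => 1) - deltaPlan τ fun _ => 1)
      = (∫ ω, |σ ω - τ ω| ∂P) ^ (1 / p.toReal) := by
  unfold inorm
  congr 1
  refine integral_congr_ae (.of_forall fun ω => ?_)
  simp only [Pi.sub_apply, deltaPlan, (hσ ω).2, (hτ ω).2, if_true, sub_self, abs_zero,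
    Real.zero_rpow hp.ne', add_zero]
  exact setIntegral_abs_ite_sub_ite_rpow (hσ ω) (hτ ω) hp

lemma tendsto_integral_abs_sub_of_ae_tendsto (P : Measure Ω) [IsFiniteMeasure P] {T : ℝ}
    {σ : ℕ → Ω → ℝ} {τ : Ω → ℝ} (hσm : ∀ n, Measurable (σ n)) (hτm : Measurable τ)
    (hσ : ∀ n ω, σ n ω ∈ Icc 0 T) (hτ : ∀ ω, τ ω ∈ Icc 0 T)
    (hconv : ∀ᵐ ω ∂P, Tendsto (fun n => σ n ω) atTop (𝓝 (τ ω))) :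
    Tendsto (fun n => ∫ ω, |σ n ω - τ ω| ∂P) atTop (𝓝 0) := by
  have hbound : ∀ n, ∀ᵐ ω ∂P, ‖|σ n ω - τ ω|‖ ≤ T := fun n => .of_forall fun ω => by
    rw [Real.norm_eq_abs, abs_abs, abs_sub_le_iff]
    constructor <;> linarith [(hσ n ω).1, (hσ n ω).2, (hτ ω).1, (hτ ω).2]
  have hlim : ∀ᵐ ω ∂P, Tendsto (fun n => |σ n ω - τ ω|) atTop (𝓝 0) := by
    filter_upwards [hconv] with ω hω
    simpa using (hω.sub_const (τ ω)).abs
  simpa using tendsto_integral_of_dominated_convergence (fun _ => T)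
    (fun n => ((hσm n).sub hτm).abs.aestronglyMeasurable) (integrable_const T) hbound hlim

lemma Compatible.tendsto_deltaPlan_one {P : Measure Ω} [IsFiniteMeasure P] {ℱ : Filtration ℝ m}
    {T : ℝ} {p : ℝ≥0∞} (hp : p ≠ 0) (hp' : p ≠ ∞) {π : (Ω → ℝ → ℝ) →ₗ[ℝ] ℝ}
    (hcomp : Compatible P ℱ T p π) {τn : ℕ → Ω → ℝ} {τ : Ω → ℝ}
    (hτn : ∀ n, IsBddStoppingTime ℱ T (τn n)) (hτ : IsBddStoppingTime ℱ T τ)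
    (hconv : ∀ᵐ ω ∂P, Tendsto (fun n => τn n ω) atTop (𝓝 (τ ω))) :
    Tendsto (fun n => π (deltaPlan (τn n) fun _ => 1)) atTop (𝓝 (π (deltaPlan τ fun _ => 1))) := by
  have hr : 0 < p.toReal := ENNReal.toReal_pos hp hp'
  refine hcomp _ (isPlan_deltaPlan_one P ℱ p hτ) _ (fun n => isPlan_deltaPlan_one P ℱ p (hτn n)) ?_
  simp_rw [inorm_deltaPlan_one_sub P hr (fun ω => (hτn _).2 ω) hτ.2]
  have hE := tendsto_integral_abs_sub_of_ae_tendsto P (fun n => (hτn n).measurable)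
    hτ.measurable (fun n => (hτn n).2) hτ.2 hconv
  have hcont := Real.continuousAt_rpow_const 0 (1 / p.toReal) (Or.inr (one_div_pos.mpr hr).le)
  rw [ContinuousAt, Real.zero_rpow (one_div_pos.mpr hr).ne'] at hcont
  exact hcont.comp hE

theorem T_system_continuous_in_expectation_general
    {Ω : Type*} [m : MeasurableSpace Ω] (P : Measure Ω) [IsProbabilityMeasure P]
    (ℱ : Filtration ℝ m) (T : ℝ)
    (p : ℝ≥0∞) (hp : 1 ≤ p) (hp' : p ≠ ∞)
    (π : (Ω → ℝ → ℝ) →ₗ[ℝ] ℝ)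
    (hcomp : Compatible P ℱ T p π)
    (τn : ℕ → Ω → ℝ) (τ : Ω → ℝ)
    (hτn : ∀ n, IsBddStoppingTime ℱ T (τn n)) (hτ : IsBddStoppingTime ℱ T τ)
    (hconv : ∀ᵐ ω ∂P, Tendsto (fun n => τn n ω) atTop (nhds (τ ω)))
    (zn : ℕ → Ω → ℝ) (zτ : Ω → ℝ)
    (hrepn : ∀ n, ∀ Z : Ω → ℝ, Measurable[(hτn n).1.measurableSpace] Z →
      (∃ C, ∀ ω, |Z ω| ≤ C) → π (deltaPlan (τn n) Z) = ∫ ω, Z ω * zn n ω ∂P)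
    (hrep : ∀ Z : Ω → ℝ, Measurable[hτ.1.measurableSpace] Z →
      (∃ C, ∀ ω, |Z ω| ≤ C) → π (deltaPlan τ Z) = ∫ ω, Z ω * zτ ω ∂P) :
    Tendsto (fun n => ∫ ω, zn n ω ∂P) atTop (nhds (∫ ω, zτ ω ∂P)) := by
  have hbdd : ∃ C, ∀ _ : Ω, |(1 : ℝ)| ≤ C := ⟨1, fun _ => by norm_num⟩
  have hEn : ∀ n, π (deltaPlan (τn n) fun _ => 1) = ∫ ω, zn n ω ∂P := fun n => by
    simpa using hrepn n _ measurable_const hbdd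
  have hE : π (deltaPlan τ fun _ => 1) = ∫ ω, zτ ω ∂P := by
    simpa using hrep _ measurable_const hbdd
  simpa only [hEn, hE] using
    hcomp.tendsto_deltaPlan_one (zero_lt_one.trans_le hp).ne' hp' hτn hτ hconv

/-- the `𝒯`-system representing a compatible price is continuous in
expectation: `τ_n → τ` a.s. implies `E z^{τ_n} → E z^τ`. -/
theorem T_system_continuous_in_expectation
    {Ω : Type*} [m : MeasurableSpace Ω] (P : Measure Ω) [IsProbabilityMeasure P]
    (ℱ : Filtration ℝ m) (T : ℝ) (hT : 0 < T)
    (p : ℝ≥0∞) (hp : 1 ≤ p) (hp' : p ≠ ∞)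
    (π : (Ω → ℝ → ℝ) →ₗ[ℝ] ℝ)
    (hπ : ∀ x, IsPlan P ℱ T p x → 0 ≤ π x)
    (hcomp : Compatible P ℱ T p π)
    (τn : ℕ → Ω → ℝ) (τ : Ω → ℝ)
    (hτn : ∀ n, IsBddStoppingTime ℱ T (τn n)) (hτ : IsBddStoppingTime ℱ T τ)
    (hconv : ∀ᵐ ω ∂P, Tendsto (fun n => τn n ω) atTop (nhds (τ ω)))
    (zn : ℕ → Ω → ℝ) (zτ : Ω → ℝ)
    (hznm : ∀ n, Measurable[(hτn n).1.measurableSpace] (zn n))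
    (hzn0 : ∀ n, ∀ᵐ ω ∂P, 0 ≤ zn n ω) (hzni : ∀ n, Integrable (zn n) P)
    (hzm : Measurable[hτ.1.measurableSpace] zτ) (hz0 : ∀ᵐ ω ∂P, 0 ≤ zτ ω)
    (hzi : Integrable zτ P)
    (hrepn : ∀ n, ∀ Z : Ω → ℝ, Measurable[(hτn n).1.measurableSpace] Z →
      (∃ C, ∀ ω, |Z ω| ≤ C) → π (deltaPlan (τn n) Z) = ∫ ω, Z ω * zn n ω ∂P)
    (hrep : ∀ Z : Ω → ℝ, Measurable[hτ.1.measurableSpace] Z →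
      (∃ C, ∀ ω, |Z ω| ≤ C) → π (deltaPlan τ Z) = ∫ ω, Z ω * zτ ω ∂P) :
    Tendsto (fun n => ∫ ω, zn n ω ∂P) atTop (nhds (∫ ω, zτ ω ∂P)) :=
  T_system_continuous_in_expectation_general (m := m) P ℱ T p hp hp' π hcomp τn τ hτn hτ hconv zn zτ
    hrepn hrep

end Equil
end
end

section
/- Let p = 1, let π be a compatible price, and let ψ be a nonnegative, almost surely bounded, adapted process with right-continuous sample paths admitting left limits which is the optional projection of a measurable process ξ with continuous sample paths and E[sup_{t∈[0,T]} |ξ_t|] < ∞, and suppose π(δ_τ h) = E[ψ_τ · h] for every stopping time τ ≤ T and every h ∈ L^1(𝓕_τ, P). Then π(x) = E ∫_{[0,T]} ψ_t dx(t) for every x ∈ E_+ with x_T ∈ L^∞(P). -/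
open MeasureTheory Set Filter
open scoped ENNReal Topology Classical

noncomputable section

namespace Equil

variable {Ω : Type*} [m : MeasurableSpace Ω]

/-! The plan `x` is approximated by its left-point discretisations `x ∘ gridFloor δ` on the
uniform grids of mesh `δ = T / (n + 1)`. Such a discretisation is a finite sum of deliveries
`δ_{iδ} (Δᵢ x)` at deterministic times, so the representation hypothesis prices it at the
Riemann–Stieltjes sum `E ∑ ψ(iδ) Δᵢ x = E ∫ ψ ∘ gridCeil δ dx`. Right-continuity and
boundedness of `ψ` make these sums converge to `E ∫ ψ dx` by dominated convergence, while for
`p = 1` the discretisation error is `‖x ∘ gridFloor δ - x‖ ≤ δ E x_T`, so compatibility forces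
the prices to converge to `π x`. -/

def gridFloor (δ t : ℝ) : ℝ := ⌊t / δ⌋ * δ

def gridCeil (δ t : ℝ) : ℝ := ⌈t / δ⌉ * δ

section Grid

variable {δ : ℝ}

lemma gridFloor_le (hδ : 0 < δ) (t : ℝ) : gridFloor δ t ≤ t :=
  (le_div_iff₀ hδ).1 (Int.floor_le _)

lemma sub_lt_gridFloor (hδ : 0 < δ) (t : ℝ) : t - δ < gridFloor δ t := by
  have := Int.sub_one_lt_floor (t / δ)
  rw [gridFloor, ← div_lt_iff₀ hδ, sub_div, div_self hδ.ne']
  linarith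

lemma le_gridCeil (hδ : 0 < δ) (t : ℝ) : t ≤ gridCeil δ t :=
  (div_le_iff₀ hδ).1 (Int.le_ceil _)

lemma gridCeil_lt_add (hδ : 0 < δ) (t : ℝ) : gridCeil δ t < t + δ := by
  have := Int.ceil_lt_add_one (t / δ)
  rw [gridCeil, ← lt_div_iff₀ hδ, add_div, div_self hδ.ne']
  linarith

lemma gridFloor_mono (hδ : 0 < δ) : Monotone (gridFloor δ) := fun _ _ h =>
  mul_le_mul_of_nonneg_right (by gcongr) hδ.le

lemma gridCeil_mono (hδ : 0 < δ) : Monotone (gridCeil δ) := fun _ _ h =>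
  mul_le_mul_of_nonneg_right (by gcongr) hδ.le

lemma gridFloor_natCast_mul (hδ : 0 < δ) (k : ℕ) : gridFloor δ (k * δ) = k * δ := by
  rw [gridFloor, mul_div_cancel_right₀ _ hδ.ne', Int.floor_natCast, Int.cast_natCast]

lemma gridCeil_natCast_mul (hδ : 0 < δ) (k : ℕ) : gridCeil δ (k * δ) = k * δ := by
  rw [gridCeil, mul_div_cancel_right₀ _ hδ.ne', Int.ceil_natCast, Int.cast_natCast]

lemma gridCeil_eq_of_mem_Ioc (hδ : 0 < δ) {k : ℤ} {t : ℝ}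
    (ht : t ∈ Ioc ((k - 1) * δ) (k * δ)) : gridCeil δ t = k * δ := by
  rw [gridCeil, Int.ceil_eq_iff.2 ⟨(lt_div_iff₀ hδ).2 ht.1, (div_le_iff₀ hδ).2 ht.2⟩]

lemma le_gridFloor_iff (hδ : 0 < δ) {k : ℤ} {t : ℝ} : k * δ ≤ gridFloor δ t ↔ k * δ ≤ t := by
  rw [gridFloor, mul_le_mul_iff_left₀ hδ, Int.cast_le, Int.le_floor, le_div_iff₀ hδ]

lemma gridFloor_le_iff (hδ : 0 < δ) {k : ℤ} {t : ℝ} :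
    gridFloor δ t ≤ k * δ ↔ t < (k + 1) * δ := by
  rw [gridFloor, mul_le_mul_iff_left₀ hδ, Int.cast_le, Int.floor_le_iff, div_lt_iff₀ hδ]

lemma gridFloor_eventuallyEq (hδ : 0 < δ) (t : ℝ) :
    gridFloor δ =ᶠ[𝓝[≥] t] fun _ => gridFloor δ t := by
  filter_upwards [Ico_mem_nhdsGE (sub_lt_iff_lt_add.1 (sub_lt_gridFloor hδ t))] with s hs
  have hfloor : ⌊s / δ⌋ = ⌊t / δ⌋ := Int.floor_eq_iff.2
    ⟨(Int.floor_le _).trans (by gcongr; exact hs.1),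
      by rw [div_lt_iff₀ hδ, add_mul, one_mul]; exact hs.2⟩
  simp only [gridFloor, hfloor]

lemma tendsto_gridCeil {δ : ℕ → ℝ} (hδ : ∀ n, 0 < δ n) (hδ0 : Tendsto δ atTop (𝓝 0))
    (t : ℝ) : Tendsto (fun n => gridCeil (δ n) t) atTop (𝓝[≥] t) := by
  refine tendsto_nhdsWithin_of_tendsto_nhds_of_eventually_within _ ?_
    (.of_forall fun n => le_gridCeil (hδ n) t)
  refine tendsto_of_tendsto_of_tendsto_of_le_of_le tendsto_const_nhds ?_
    (fun n => le_gridCeil (hδ n) t) fun n => (gridCeil_lt_add (hδ n) t).le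
  simpa using hδ0.const_add t

lemma natCast_mul_mem_Icc (hδ : 0 < δ) {N : ℕ} {T : ℝ} (hN : N * δ = T) {i : ℕ}
    (hi : i ≤ N) : (i : ℝ) * δ ∈ Icc 0 T :=
  ⟨by positivity, by rw [← hN]; gcongr⟩

lemma gridCeil_mem_Icc (hδ : 0 < δ) {N : ℕ} {T : ℝ} (hN : N * δ = T) {t : ℝ} (ht : t ∈ Icc 0 T) :
    gridCeil δ t ∈ Icc 0 T := by
  refine ⟨ht.1.trans (le_gridCeil hδ t), (gridCeil_mono hδ ht.2).trans_eq ?_⟩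
  rw [← hN, gridCeil_natCast_mul hδ]

end Grid

section Path

variable {f : ℝ → ℝ} {δ : ℝ}

lemma nonneg_of_monotone_of_zero_neg (hmono : Monotone f) (hzero : ∀ t < 0, f t = 0)
    (t : ℝ) : 0 ≤ f t := by
  rcases lt_or_ge t 0 with ht | ht
  · exact (hzero t ht).ge
  · exact (hzero (-1) (by norm_num)).ge.trans (hmono (by linarith))

/-- The mass of `df` on the grid cell `((i - 1) δ, i δ]`; when `f` vanishes on `(-∞, 0)`, for
`i = 0` this is the atom `f 0`. -/
def gridIncr (f : ℝ → ℝ) (δ : ℝ) (i : ℕ) : ℝ := f (i * δ) - f ((i - 1) * δ)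

lemma gridIncr_nonneg (hmono : Monotone f) (hδ : 0 < δ) (i : ℕ) : 0 ≤ gridIncr f δ i :=
  sub_nonneg.2 (hmono (by gcongr; linarith))

lemma sum_range_gridIncr (hδ : 0 < δ) (hzero : ∀ t < 0, f t = 0) (K : ℕ) :
    ∑ i ∈ Finset.range (K + 1), gridIncr f δ i = f (K * δ) := by
  have := Finset.sum_range_sub (fun i : ℕ => f ((i - 1) * δ)) (K + 1)
  simp only [Nat.cast_add, Nat.cast_one, add_sub_cancel_right, Nat.cast_zero, zero_sub,
    neg_one_mul, hzero (-δ) (by linarith), sub_zero] at this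
  exact this

lemma sum_range_ite_gridIncr (hδ : 0 < δ) (hzero : ∀ t < 0, f t = 0) (t : ℝ) (N : ℕ) :
    ∑ i ∈ Finset.range (N + 1), (if (i : ℝ) * δ ≤ t then gridIncr f δ i else 0) =
      f (min (gridFloor δ t) (N * δ)) := by
  induction N with
  | zero =>
    simp only [zero_add, Finset.range_one, Finset.sum_singleton, Nat.cast_zero, zero_mul]
    split_ifs with ht
    · rw [min_eq_right (by simpa using (le_gridFloor_iff hδ (k := 0)).2 (by simpa using ht))]
      simp [gridIncr, hzero (-δ) (by linarith)]
    · rw [hzero _ ((min_le_left _ _).trans_lt ((gridFloor_le hδ t).trans_lt (not_le.1 ht)))]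
  | succ N ih =>
    rw [Finset.sum_range_succ, ih]
    split_ifs with ht
    · have hNle : (N : ℝ) * δ ≤ gridFloor δ t := by
        exact_mod_cast (le_gridFloor_iff hδ (k := N)).2 (by push_cast at ht ⊢; linarith)
      have hN1le : ((N + 1 : ℕ) : ℝ) * δ ≤ gridFloor δ t := by
        exact_mod_cast (le_gridFloor_iff hδ (k := N + 1)).2 (by exact_mod_cast ht)
      rw [min_eq_right hNle, min_eq_right hN1le, gridIncr]
      push_cast
      ring_nf
    · have hle : gridFloor δ t ≤ N * δ := by
        exact_mod_cast (gridFloor_le_iff hδ (k := N)).2 (by exact_mod_cast not_le.1 ht)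
      rw [min_eq_left hle, min_eq_left (hle.trans (by gcongr; simp)), add_zero]

lemma comp_gridFloor_eq_sum_gridIncr {T : ℝ} (hδ : 0 < δ)
    (hzero : ∀ t < 0, f t = 0) (hconst : ∀ t, T ≤ t → f t = f T) {N : ℕ} (hN : N * δ = T)
    (t : ℝ) : f (gridFloor δ t) =
      ∑ i ∈ Finset.range (N + 1), (if (i : ℝ) * δ ≤ t then gridIncr f δ i else 0) := by
  rw [sum_range_ite_gridIncr hδ hzero, hN]
  rcases le_total (gridFloor δ t) T with h | h
  · rw [min_eq_left h]
  · rw [min_eq_right h, hconst _ h]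

end Path

section PathMeasure

variable {f : ℝ → ℝ} {δ T : ℝ}

lemma pathMeasure_eq (hmono : Monotone f) (hrc : ∀ t, ContinuousWithinAt f (Ici t) t) :
    pathMeasure f = StieltjesFunction.measure ⟨f, hmono, hrc⟩ :=
  dif_pos ⟨hmono, hrc⟩

lemma pathMeasure_Ioc (hmono : Monotone f) (hrc : ∀ t, ContinuousWithinAt f (Ici t) t)
    (a b : ℝ) : pathMeasure f (Ioc a b) = ENNReal.ofReal (f b - f a) := by
  rw [pathMeasure_eq hmono hrc, StieltjesFunction.measure_Ioc]

lemma pathMeasure_Icc_lt_top (hmono : Monotone f) (hrc : ∀ t, ContinuousWithinAt f (Ici t) t)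
    (a b : ℝ) : pathMeasure f (Icc a b) < ⊤ := by
  rw [pathMeasure_eq hmono hrc]
  exact measure_Icc_lt_top

lemma pathMeasure_Iio_zero (hmono : Monotone f) (hrc : ∀ t, ContinuousWithinAt f (Ici t) t)
    (hzero : ∀ t < 0, f t = 0) : pathMeasure f (Iio 0) = 0 := by
  have hbot : Tendsto f atBot (𝓝 0) :=
    tendsto_const_nhds.congr' ((eventually_lt_atBot 0).mono fun t ht => (hzero t ht).symm)
  have hleft : Function.leftLim f 0 = 0 :=
    leftLim_eq_of_tendsto <|
      tendsto_const_nhds.congr' (eventually_nhdsWithin_of_forall fun t ht => (hzero t ht).symm)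
  rw [pathMeasure_eq hmono hrc, StieltjesFunction.measure_Iio (f := ⟨f, hmono, hrc⟩) hbot 0]
  simpa using hleft.le

lemma Icc_ae_eq_Ioc_pathMeasure (hmono : Monotone f)
    (hrc : ∀ t, ContinuousWithinAt f (Ici t) t) (hzero : ∀ t < 0, f t = 0) (hδ : 0 < δ) :
    Icc 0 T =ᵐ[pathMeasure f] Ioc (-δ) T := by
  refine ae_eq_set.2 ⟨?_, measure_mono_null ?_ (pathMeasure_Iio_zero hmono hrc hzero)⟩
  · have hsub : Icc 0 T ⊆ Ioc (-δ) T := fun t ht => ⟨by linarith [ht.1], ht.2⟩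
    rw [sdiff_eq_empty.2 hsub, measure_empty]
  · exact fun t ht => not_le.1 fun h => ht.2 ⟨h, ht.1.2⟩

end PathMeasure

section RiemannStieltjes

variable {f : ℝ → ℝ} {δ T : ℝ}

lemma biUnion_range_Ioc_grid (hδ : 0 < δ) (K : ℕ) :
    ⋃ i ∈ Finset.range (K + 1), Ioc (((i : ℝ) - 1) * δ) (i * δ) = Ioc (-δ) (K * δ) := by
  induction K with
  | zero => simp
  | succ K ih =>
    rw [Finset.range_add_one, Finset.set_biUnion_insert, ih, union_comm]
    push_cast
    rw [add_sub_cancel_right, Ioc_union_Ioc_eq_Ioc ((neg_nonpos.2 hδ.le).trans (by positivity))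
      (by linarith)]

lemma pairwise_disjoint_Ioc_grid (hδ : 0 < δ) :
    Pairwise (Function.onFun Disjoint fun i : ℕ => Ioc (((i : ℝ) - 1) * δ) (i * δ)) :=
  (pairwise_disjoint_on _).2 fun i j hij =>
    Ioc_disjoint_Ioc_of_le (by gcongr; exact le_sub_iff_add_le.2 (by exact_mod_cast hij))

lemma measurable_comp_gridCeil (g : ℝ → ℝ) (δ : ℝ) : Measurable fun t => g (gridCeil δ t) :=
  (measurable_from_top (f := fun k : ℤ => g (k * δ))).comp
    (Int.measurable_ceil.comp (measurable_id.div_const δ))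

lemma setIntegral_comp_gridCeil (hmono : Monotone f)
    (hrc : ∀ t, ContinuousWithinAt f (Ici t) t) (hzero : ∀ t < 0, f t = 0) (hδ : 0 < δ)
    {N : ℕ} (hN : N * δ = T) (g : ℝ → ℝ) :
    ∫ t in Icc 0 T, g (gridCeil δ t) ∂pathMeasure f =
      ∑ i ∈ Finset.range (N + 1), g (i * δ) * gridIncr f δ i := by
  have hcell : ∀ i : ℕ, EqOn (fun t => g (gridCeil δ t)) (fun _ => g (i * δ))
      (Ioc (((i : ℝ) - 1) * δ) (i * δ)) := fun i t ht => by
    have := gridCeil_eq_of_mem_Ioc hδ (k := i) (by exact_mod_cast ht)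
    simp only [this, Int.cast_natCast]
  have hfin : ∀ i : ℕ, pathMeasure f (Ioc (((i : ℝ) - 1) * δ) (i * δ)) ≠ ⊤ := fun i => by
    rw [pathMeasure_Ioc hmono hrc]
    exact ENNReal.ofReal_ne_top
  rw [setIntegral_congr_set (Icc_ae_eq_Ioc_pathMeasure hmono hrc hzero hδ), ← hN,
    ← biUnion_range_Ioc_grid hδ, integral_biUnion_finset _ (fun _ _ => measurableSet_Ioc)
      ((pairwise_disjoint_Ioc_grid hδ).set_pairwise _)
      fun i _ => (integrableOn_const (hfin i)).congr_fun (hcell i).symm measurableSet_Ioc]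
  refine Finset.sum_congr rfl fun i _ => ?_
  rw [setIntegral_congr_fun measurableSet_Ioc (hcell i), setIntegral_const, smul_eq_mul,
    measureReal_def, pathMeasure_Ioc hmono hrc, ← gridIncr,
    ENNReal.toReal_ofReal (gridIncr_nonneg hmono hδ i), mul_comm]

end RiemannStieltjes

section Convergence

variable {f : ℝ → ℝ} {δ T : ℝ}

lemma tendsto_setIntegral_comp_gridCeil (hmono : Monotone f)
    (hrc : ∀ t, ContinuousWithinAt f (Ici t) t) {g : ℝ → ℝ} {C : ℝ}
    (hgrc : ∀ t ∈ Ico 0 T, ContinuousWithinAt g (Ici t) t) (hgC : ∀ t ∈ Icc 0 T, |g t| ≤ C)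
    {N : ℕ → ℕ} {δ : ℕ → ℝ} (hδ : ∀ n, 0 < δ n) (hN : ∀ n, N n * δ n = T)
    (hδ0 : Tendsto δ atTop (𝓝 0)) :
    Tendsto (fun n => ∫ t in Icc 0 T, g (gridCeil (δ n) t) ∂pathMeasure f) atTop
      (𝓝 (∫ t in Icc 0 T, g t ∂pathMeasure f)) := by
  refine tendsto_integral_of_dominated_convergence (fun _ => C)
    (fun n => (measurable_comp_gridCeil g (δ n)).aestronglyMeasurable)
    (integrableOn_const (pathMeasure_Icc_lt_top hmono hrc 0 T).ne)
    (fun n => ?_) ?_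
  · filter_upwards [ae_restrict_mem measurableSet_Icc] with t ht
    exact hgC _ (gridCeil_mem_Icc (hδ n) (hN n) ht)
  · filter_upwards [ae_restrict_mem measurableSet_Icc] with t ht
    rcases ht.2.lt_or_eq with htT | rfl
    · exact (hgrc t ⟨ht.1, htT⟩).tendsto.comp (tendsto_gridCeil hδ hδ0 t)
    · have hT : ∀ n, gridCeil (δ n) t = t := fun n =>
        le_antisymm (gridCeil_mem_Icc (hδ n) (hN n) ht).2 (le_gridCeil (hδ n) t)
      simp only [hT, tendsto_const_nhds]

lemma setIntegral_sub_comp_gridFloor_le (hmono : Monotone f) (hzero : ∀ t < 0, f t = 0)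
    (hδ : 0 < δ) (hT : 0 ≤ T) :
    ∫ t in Icc 0 T, (f t - f (gridFloor δ t)) ≤ δ * f T := by
  have hint : ∀ {g : ℝ → ℝ}, Monotone g → IntegrableOn g (Icc 0 T) :=
    fun hg => (hg.monotoneOn _).integrableOn_isCompact isCompact_Icc
  have hshift : Monotone fun t => f (t - δ) := fun s t h => hmono (by linarith)
  have hii : ∀ a b, IntervalIntegrable f volume a b := fun _ _ => hmono.intervalIntegrable
  calc ∫ t in Icc 0 T, (f t - f (gridFloor δ t))
      ≤ ∫ t in Icc 0 T, (f t - f (t - δ)) :=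
        setIntegral_mono_on ((hint hmono).sub (hint (hmono.comp (gridFloor_mono hδ))))
          ((hint hmono).sub (hint hshift)) measurableSet_Icc fun t _ =>
            sub_le_sub_left (hmono (sub_lt_gridFloor hδ t).le) _
    _ = (∫ t in (T - δ)..T, f t) - ∫ t in (-δ)..0, f t := by
        rw [integral_Icc_eq_integral_Ioc, ← intervalIntegral.integral_of_le hT,
          intervalIntegral.integral_sub (hii 0 T) hshift.intervalIntegrable,
          intervalIntegral.integral_comp_sub_right, zero_sub,
          intervalIntegral.integral_interval_sub_interval_comm (hii _ _) (hii _ _) (hii _ _),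
          intervalIntegral.integral_symm 0, intervalIntegral.integral_symm T]
        ring
    _ ≤ δ * f T - 0 := by
        gcongr
        · calc ∫ t in (T - δ)..T, f t ≤ ∫ _ in (T - δ)..T, f T :=
                intervalIntegral.integral_mono_on (by linarith) (hii _ _) intervalIntegrable_const
                  fun t ht => hmono ht.2
            _ = δ * f T := by simp
        · exact intervalIntegral.integral_nonneg (by linarith)
            fun t _ => nonneg_of_monotone_of_zero_neg hmono hzero t
    _ = δ * f T := sub_zero _

end Convergence

section Plans

variable {P : Measure Ω} {ℱ : Filtration ℝ m} {T : ℝ} {x : Ω → ℝ → ℝ} {δ : ℝ} {N : ℕ}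

lemma IsPlan.comp_gridFloor {p : ℝ≥0∞} (hx : IsPlan P ℱ T p x) (hδ : 0 < δ)
    (hN : N * δ = T) : IsPlan P ℱ T p fun ω t => x ω (gridFloor δ t) := by
  have hT : gridFloor δ T = T := by rw [← hN, gridFloor_natCast_mul hδ]
  refine ⟨fun ω => (hx.mono ω).comp (gridFloor_mono hδ), fun ω t => ?_,
    fun ω t ht => hx.zero_neg ω _ ((gridFloor_le hδ t).trans_lt ht), fun ω t ht => ?_,
    fun t => (hx.adapted _).mono (ℱ.mono (gridFloor_le hδ t)) le_rfl,
    by simpa [hT] using hx.memLp⟩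
  · exact continuousWithinAt_const.congr_of_eventuallyEq
      ((gridFloor_eventuallyEq hδ t).fun_comp (x ω)) rfl
  · rw [hT, hx.const_ge ω _ (hT.symm.trans_le (gridFloor_mono hδ ht))]

lemma IsPlan.comp_gridFloor_eq_sum_deltaPlan {p : ℝ≥0∞} (hx : IsPlan P ℱ T p x) (hδ : 0 < δ)
    (hN : N * δ = T) :
    (fun ω t => x ω (gridFloor δ t)) = ∑ i ∈ Finset.range (N + 1),
      deltaPlan (fun _ => (i : ℝ) * δ) fun ω => gridIncr (x ω) δ i := by
  ext ω t
  simp only [Finset.sum_apply, deltaPlan]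
  exact comp_gridFloor_eq_sum_gridIncr hδ (hx.zero_neg ω) (hx.const_ge ω) hN t

lemma IsPlan.integrable_apply (hx : IsPlan P ℱ T 1 x) (t : ℝ) :
    Integrable (fun ω => x ω t) P := by
  refine (memLp_one_iff_integrable.1 hx.memLp).mono'
    ((hx.adapted t).mono (ℱ.le t) le_rfl).aestronglyMeasurable (.of_forall fun ω => ?_)
  rw [Real.norm_eq_abs,
    abs_of_nonneg (nonneg_of_monotone_of_zero_neg (hx.mono ω) (hx.zero_neg ω) t)]
  rcases le_total t T with h | h
  · exact hx.mono ω h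
  · exact (hx.const_ge ω t h).le

lemma IsPlan.integrable_gridIncr (hx : IsPlan P ℱ T 1 x) (i : ℕ) :
    Integrable (fun ω => gridIncr (x ω) δ i) P :=
  (hx.integrable_apply _).sub (hx.integrable_apply _)

lemma IsPlan.measurable_gridIncr {p : ℝ≥0∞} (hx : IsPlan P ℱ T p x) (hδ : 0 < δ) (i : ℕ) :
    Measurable[ℱ (i * δ)] fun ω => gridIncr (x ω) δ i :=
  (hx.adapted _).sub ((hx.adapted _).mono (ℱ.mono (by gcongr; linarith)) le_rfl)

def RepresentsAtStoppingTimes (P : Measure Ω) (ℱ : Filtration ℝ m) (T : ℝ)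
    (π : (Ω → ℝ → ℝ) →ₗ[ℝ] ℝ) (ψ : Ω → ℝ → ℝ) : Prop :=
  ∀ τ (hτ : IsBddStoppingTime ℱ T τ), ∀ h : Ω → ℝ,
    Measurable[hτ.1.measurableSpace] h → Integrable h P →
      π (deltaPlan τ h) = ∫ ω, ψ ω (τ ω) * h ω ∂P

lemma RepresentsAtStoppingTimes.price_deltaPlan_const {π : (Ω → ℝ → ℝ) →ₗ[ℝ] ℝ}
    {ψ : Ω → ℝ → ℝ} (hrep : RepresentsAtStoppingTimes P ℱ T π ψ) {s : ℝ} (hs : s ∈ Icc 0 T)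
    {h : Ω → ℝ} (hmeas : Measurable[ℱ s] h) (hint : Integrable h P) :
    π (deltaPlan (fun _ => s) h) = ∫ ω, ψ ω s * h ω ∂P :=
  hrep _ ⟨isStoppingTime_const ℱ s, fun _ => hs⟩ h
    (by rwa [IsStoppingTime.measurableSpace_const]) hint

lemma RepresentsAtStoppingTimes.price_comp_gridFloor {π : (Ω → ℝ → ℝ) →ₗ[ℝ] ℝ}
    {ψ : Ω → ℝ → ℝ} (hrep : RepresentsAtStoppingTimes P ℱ T π ψ)
    (hψ : ∀ t, Measurable fun ω => ψ ω t) {C : ℝ}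
    (hbdd : ∀ᵐ ω ∂P, ∀ t ∈ Icc 0 T, |ψ ω t| ≤ C)
    (hx : IsPlan P ℱ T 1 x) (hδ : 0 < δ) (hN : N * δ = T) :
    π (fun ω t => x ω (gridFloor δ t)) =
      ∫ ω, ∑ i ∈ Finset.range (N + 1), ψ ω (i * δ) * gridIncr (x ω) δ i ∂P := by
  have hgrid : ∀ i ∈ Finset.range (N + 1), (i : ℝ) * δ ∈ Icc 0 T := fun i hi =>
    natCast_mul_mem_Icc hδ hN (Finset.mem_range_succ_iff.1 hi)
  rw [hx.comp_gridFloor_eq_sum_deltaPlan hδ hN, map_sum, integral_finsetSum _ fun i hi =>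
    (hx.integrable_gridIncr i).bdd_mul (hψ _).aestronglyMeasurable
      (hbdd.mono fun ω hω => hω _ (hgrid i hi))]
  exact Finset.sum_congr rfl fun i hi => hrep.price_deltaPlan_const (hgrid i hi)
    (hx.measurable_gridIncr hδ i) (hx.integrable_gridIncr i)

lemma inorm_nonneg (P : Measure Ω) (T : ℝ) (p : ℝ≥0∞) (z : Ω → ℝ → ℝ) : 0 ≤ inorm P T p z :=
  Real.rpow_nonneg (integral_nonneg fun _ =>
    add_nonneg (integral_nonneg fun _ => by positivity) (by positivity)) _

lemma IsPlan.inorm_comp_gridFloor_sub_le (hx : IsPlan P ℱ T 1 x) (hT : 0 ≤ T) (hδ : 0 < δ)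
    (hN : N * δ = T) :
    inorm P T 1 ((fun ω t => x ω (gridFloor δ t)) - x) ≤ δ * ∫ ω, x ω T ∂P := by
  have habs : ∀ ω t, |x ω (gridFloor δ t) - x ω t| = x ω t - x ω (gridFloor δ t) := fun ω t =>
    by rw [abs_sub_comm, abs_of_nonneg (sub_nonneg.2 (hx.mono ω (gridFloor_le hδ t)))]
  have hT' : gridFloor δ T = T := by rw [← hN, gridFloor_natCast_mul hδ]
  simp only [inorm, ENNReal.toReal_one, Real.rpow_one, div_one, Pi.sub_apply, habs, hT',
    sub_self, abs_zero, add_zero]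
  rw [← integral_const_mul]
  exact integral_mono_of_nonneg
    (.of_forall fun ω => integral_nonneg fun t => sub_nonneg.2 (hx.mono ω (gridFloor_le hδ t)))
    ((hx.integrable_apply T).const_mul δ)
    (.of_forall fun ω => setIntegral_sub_comp_gridFloor_le (hx.mono ω) (hx.zero_neg ω) hδ hT)

lemma IsPlan.tendsto_inorm_comp_gridFloor_sub (hx : IsPlan P ℱ T 1 x) (hT : 0 ≤ T)
    {N : ℕ → ℕ} {δ : ℕ → ℝ} (hδ : ∀ n, 0 < δ n) (hN : ∀ n, N n * δ n = T)
    (hδ0 : Tendsto δ atTop (𝓝 0)) :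
    Tendsto (fun n => inorm P T 1 ((fun ω t => x ω (gridFloor (δ n) t)) - x)) atTop (𝓝 0) :=
  tendsto_of_tendsto_of_tendsto_of_le_of_le tendsto_const_nhds
    (by simpa using hδ0.mul_const (∫ ω, x ω T ∂P)) (fun n => inorm_nonneg _ _ _ _)
    fun n => hx.inorm_comp_gridFloor_sub_le hT (hδ n) (hN n)

lemma IsPlan.tendsto_integral_sum_gridIncr (hx : IsPlan P ℱ T 1 x) {ψ : Ω → ℝ → ℝ}
    (hψ : ∀ t, Measurable fun ω => ψ ω t)
    (hψrc : ∀ ω, ∀ t ∈ Ico 0 T, ContinuousWithinAt (ψ ω) (Ici t) t) {C : ℝ}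
    (hbdd : ∀ᵐ ω ∂P, ∀ t ∈ Icc 0 T, |ψ ω t| ≤ C)
    {N : ℕ → ℕ} {δ : ℕ → ℝ} (hδ : ∀ n, 0 < δ n) (hN : ∀ n, N n * δ n = T)
    (hδ0 : Tendsto δ atTop (𝓝 0)) :
    Tendsto (fun n => ∫ ω, ∑ i ∈ Finset.range (N n + 1),
      ψ ω (i * δ n) * gridIncr (x ω) (δ n) i ∂P) atTop (𝓝 (pairPlan P T ψ x)) := by
  refine tendsto_integral_of_dominated_convergence (fun ω => C * x ω T)
    (fun n => Finset.aestronglyMeasurable_fun_sum _ fun i _ =>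
      (hψ _).aestronglyMeasurable.mul (hx.integrable_gridIncr i).aestronglyMeasurable)
    ((hx.integrable_apply T).const_mul C) (fun n => hbdd.mono fun ω hω => ?_)
    (hbdd.mono fun ω hω => ?_)
  · calc ‖∑ i ∈ Finset.range (N n + 1), ψ ω (i * δ n) * gridIncr (x ω) (δ n) i‖
        ≤ ∑ i ∈ Finset.range (N n + 1), C * gridIncr (x ω) (δ n) i := by
          refine (norm_sum_le _ _).trans (Finset.sum_le_sum fun i hi => ?_)
          have hincr := gridIncr_nonneg (hx.mono ω) (hδ n) i
          rw [norm_mul, Real.norm_eq_abs, Real.norm_eq_abs, abs_of_nonneg hincr]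
          exact mul_le_mul_of_nonneg_right
            (hω _ (natCast_mul_mem_Icc (hδ n) (hN n) (Finset.mem_range_succ_iff.1 hi))) hincr
      _ = C * x ω T := by
          rw [← Finset.mul_sum, sum_range_gridIncr (hδ n) (hx.zero_neg ω), hN n]
  · refine (tendsto_setIntegral_comp_gridCeil (hx.mono ω) (hx.right_cont ω) (hψrc ω) hω
      hδ hN hδ0).congr fun n => ?_
    exact setIntegral_comp_gridCeil (hx.mono ω) (hx.right_cont ω) (hx.zero_neg ω) (hδ n)
      (hN n) _

end Plans

theorem price_eq_pairing_on_bounded_plans_general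
    {Ω : Type*} [m : MeasurableSpace Ω] (P : Measure Ω)
    (ℱ : Filtration ℝ m) (T : ℝ) (hT : 0 < T)
    (π : (Ω → ℝ → ℝ) →ₗ[ℝ] ℝ)
    (hcomp : Compatible P ℱ T 1 π)
    (ψ : Ω → ℝ → ℝ) (hpos : ∀ ω t, 0 ≤ ψ ω t)
    (hadapted : ∀ t, Measurable[ℱ t] fun ω => ψ ω t)
    (hcad : ∀ ω, CadlagOn T (ψ ω))
    (C : ℝ) (hbdd : ∀ᵐ ω ∂P, ∀ t ∈ Set.Icc (0 : ℝ) T, ψ ω t ≤ C)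
    (hrep : ∀ τ (hτ : IsBddStoppingTime ℱ T τ), ∀ h : Ω → ℝ,
      Measurable[hτ.1.measurableSpace] h → Integrable h P →
      π (deltaPlan τ h) = ∫ ω, ψ ω (τ ω) * h ω ∂P) :
    ∀ x, IsPlan P ℱ T 1 x → (∃ B : ℝ, ∀ᵐ ω ∂P, x ω T ≤ B) →
      π x = pairPlan P T ψ x := by
  intro x hx _
  have hψ : ∀ t, Measurable fun ω => ψ ω t := fun t => (hadapted t).mono (ℱ.le t) le_rfl
  have hψC : ∀ᵐ ω ∂P, ∀ t ∈ Icc 0 T, |ψ ω t| ≤ C :=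
    hbdd.mono fun ω hω t ht => (abs_of_nonneg (hpos ω t)).trans_le (hω t ht)
  set δ : ℕ → ℝ := fun n => T / (n + 1)
  have hδ : ∀ n, 0 < δ n := fun n => by positivity
  have hN : ∀ n, ((n + 1 : ℕ) : ℝ) * δ n = T := fun n => by
    push_cast
    exact mul_div_cancel₀ T (by positivity)
  have hδ0 : Tendsto δ atTop (𝓝 0) := by
    simpa [δ, Function.comp_def] using
      (tendsto_const_div_atTop_nhds_zero_nat T).comp (tendsto_add_atTop_nat 1)
  refine tendsto_nhds_unique (hcomp x hx _ (fun n => hx.comp_gridFloor (hδ n) (hN n))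
    (hx.tendsto_inorm_comp_gridFloor_sub hT.le hδ hN hδ0)) ?_
  refine (hx.tendsto_integral_sum_gridIncr hψ (fun ω => (hcad ω).1) hψC hδ hN hδ0).congr
    fun n => ?_
  exact (RepresentsAtStoppingTimes.price_comp_gridFloor hrep hψ hψC hx (hδ n) (hN n)).symm

/-- for `p = 1`, a compatible price represented at all stopping times by a
nonnegative bounded adapted cadlag process `ψ` (the optional projection of a continuous
process with integrable running supremum) satisfies `π(x) = E ∫ ψ dx` on all bounded
consumption plans. -/
theorem price_eq_pairing_on_bounded_plans
    {Ω : Type*} [m : MeasurableSpace Ω] (P : Measure Ω) [IsProbabilityMeasure P]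
    (ℱ : Filtration ℝ m) (T : ℝ) (hT : 0 < T)
    (π : (Ω → ℝ → ℝ) →ₗ[ℝ] ℝ)
    (hπ : ∀ x, IsPlan P ℱ T 1 x → 0 ≤ π x)
    (hcomp : Compatible P ℱ T 1 π)
    (ψ : Ω → ℝ → ℝ) (hpos : ∀ ω t, 0 ≤ ψ ω t)
    (hadapted : ∀ t, Measurable[ℱ t] fun ω => ψ ω t)
    (hcad : ∀ ω, CadlagOn T (ψ ω))
    (C : ℝ) (hbdd : ∀ᵐ ω ∂P, ∀ t ∈ Set.Icc (0 : ℝ) T, ψ ω t ≤ C)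
    (ξ : Ω → ℝ → ℝ) (hξmeas : Measurable (Function.uncurry ξ))
    (hξcont : ∀ ω, ContinuousOn (ξ ω) (Set.Icc 0 T))
    (hξint : Integrable (fun ω => supOn T fun t => |ξ ω t|) P)
    (hproj : IsOptionalProjection P ℱ T ψ ξ)
    (hrep : ∀ τ (hτ : IsBddStoppingTime ℱ T τ), ∀ h : Ω → ℝ,
      Measurable[hτ.1.measurableSpace] h → Integrable h P →
      π (deltaPlan τ h) = ∫ ω, ψ ω (τ ω) * h ω ∂P) :
    ∀ x, IsPlan P ℱ T 1 x → (∃ B : ℝ, ∀ᵐ ω ∂P, x ω T ≤ B) →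
      π x = pairPlan P T ψ x :=
  price_eq_pairing_on_bounded_plans_general (m := m) P ℱ T hT π hcomp ψ hpos hadapted hcad C hbdd
    hrep

end Equil
end
end
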